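/- The function g(u) = E(u)²·(3·E(u)² - 4·u·E(u) + u² - 2) is strictly decreasing on [0,∞); in particular g(u) ≤ g(0) for all u ≥ 0. Moreover g(0) = 12/π² - 4/π = -4(π - 3)/π². -/

import Mathlib

open MeasureTheory Real Filter

/-- The standard normal density. -/
noncomputable def gphi (u : ℝ) : ℝ := Real.exp (-u ^ 2 / 2) / Real.sqrt (2 * Real.pi)

/-- The standard normal CDF. -/
noncomputable def gPhi (u : ℝ) : ℝ := ∫ s in Set.Iic u, gphi s

/-- The standard normal tail. -/
noncomputable def gPhiBar (u : ℝ) : ℝ := 1 - gPhi u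

/-- The inverse Mills ratio. -/
noncomputable def mills (u : ℝ) : ℝ := gphi u / gPhiBar u

/-- P(r) = E[tanh²(√r Z)]. -/
noncomputable def Pfun (r : ℝ) : ℝ := ∫ z : ℝ, Real.tanh (Real.sqrt r * z) ^ 2 * gphi z

/-- B(q). -/
noncomputable def Bfun (κ q : ℝ) : ℝ :=
  (1 - q) * ∫ z : ℝ, mills ((κ - Real.sqrt q * z) / Real.sqrt (1 - q)) ^ 2 * gphi z

/-- C_κ. -/
noncomputable def Ckappa (κ : ℝ) : ℝ := ∫ z : ℝ, max (κ - z) 0 ^ 2 * gphi z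

/-- The critical capacity. -/
noncomputable def alphac (κ : ℝ) : ℝ := 2 / (Real.pi * Ckappa κ)

/-- g(u) = E(u)²(3E(u)² - 4uE(u) + u² - 2). -/
noncomputable def gfun (u : ℝ) : ℝ :=
  mills u ^ 2 * (3 * mills u ^ 2 - 4 * u * mills u + u ^ 2 - 2)

/-!
Write `E` for the inverse Mills ratio and `t = E(u) - u`, which is positive. From `E' = E(E - u)`
one gets `t' = t² + ut - 1` and `g'(u) = 2E(u)² P(u, t(u))` with
`P(u, t) = 6t³ + 6ut² + (u² - 4)t - u`, so it suffices to show `H(u) = P(u, t(u)) < 0` for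
`u ≥ 0`.

For `u ≥ 3` this follows from the convergent
`E(u) < (u⁶ + 15u⁴ + 45u² + 15)/(u⁵ + 14u³ + 33u)` of Laplace's continued fraction, because `P`
is increasing in `t` there. On `[0, ∞)`, `H` can cross zero only upwards: at a zero,
`H' = 3(1 + 4t² - 8t⁴ - t(6t² + 1)u)`, and eliminating `u` with `P(u, t) = 0` shows that this is
positive. Hence `H`, being negative on `[3, ∞)`, is negative on all of `[0, ∞)`.
-/

open ProbabilityTheory Set Topology

lemma gphi_eq_gaussianPDFReal : gphi = gaussianPDFReal 0 1 := by
  ext u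
  simp [gphi, gaussianPDFReal, div_eq_inv_mul]

lemma gphi_pos (u : ℝ) : 0 < gphi u := by
  unfold gphi
  positivity

lemma gphi_neg (u : ℝ) : gphi (-u) = gphi u := by
  rw [gphi, gphi, neg_sq]

lemma continuous_gphi : Continuous gphi := by
  unfold gphi
  fun_prop

lemma integrable_gphi : Integrable gphi :=
  gphi_eq_gaussianPDFReal ▸ integrable_gaussianPDFReal 0 1

lemma integral_gphi : ∫ u, gphi u = 1 :=
  gphi_eq_gaussianPDFReal ▸ integral_gaussianPDFReal_eq_one 0 one_ne_zero

lemma hasDerivAt_gphi (u : ℝ) : HasDerivAt gphi (-u * gphi u) u := by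
  have h := (((hasDerivAt_pow 2 u).neg.div_const 2).exp).div_const (√(2 * π))
  refine h.congr_deriv ?_
  simp only [gphi, Pi.neg_apply]
  ring

lemma tendsto_gphi_atTop : Tendsto gphi atTop (𝓝 0) := by
  have h : Tendsto (fun u : ℝ => -u ^ 2 / 2) atTop atBot :=
    (tendsto_neg_atTop_atBot.comp (tendsto_pow_atTop two_ne_zero)).atBot_div_const two_pos
  have := (tendsto_exp_atBot.comp h).div_const (√(2 * π))
  rwa [zero_div] at this

lemma integrable_mul_gphi : Integrable (fun s => s * gphi s) := by
  convert (integrable_mul_exp_neg_mul_sq one_half_pos).div_const (√(2 * π)) using 2 with s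
  simp only [gphi]
  ring_nf

lemma integral_Ioi_mul_gphi (u : ℝ) : ∫ s in Ioi u, s * gphi s = gphi u := by
  have h := integral_Ioi_of_hasDerivAt_of_tendsto' (a := u) (f := -gphi) (m := 0)
    (fun x _ => by simpa using (hasDerivAt_gphi x).neg) integrable_mul_gphi.integrableOn
    (by rw [← neg_zero]; exact tendsto_gphi_atTop.neg)
  simpa using h

lemma gPhiBar_eq_integral_Ioi (u : ℝ) : gPhiBar u = ∫ s in Ioi u, gphi s := by
  have h := intervalIntegral.integral_Iic_add_Ioi (b := u) integrable_gphi.integrableOn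
    integrable_gphi.integrableOn
  rw [integral_gphi] at h
  rw [gPhiBar, gPhi]
  linarith

lemma gPhiBar_pos (u : ℝ) : 0 < gPhiBar u := by
  rw [gPhiBar_eq_integral_Ioi, setIntegral_pos_iff_support_of_nonneg_ae
    (.of_forall fun x => (gphi_pos x).le) integrable_gphi.integrableOn]
  simp [Function.support, (gphi_pos _).ne']

lemma hasDerivAt_gPhiBar (u : ℝ) : HasDerivAt gPhiBar (-gphi u) u := by
  have h : gPhi = fun v => gPhi 0 + ∫ x in (0 : ℝ)..v, gphi x := by
    ext v
    have := intervalIntegral.integral_Iic_sub_Iic (a := 0) (b := v)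
      integrable_gphi.integrableOn integrable_gphi.integrableOn
    rw [gPhi, gPhi]
    linarith
  have hPhi : HasDerivAt gPhi (gphi u) u := h ▸
    (intervalIntegral.integral_hasDerivAt_right integrable_gphi.intervalIntegrable
      (continuous_gphi.stronglyMeasurableAtFilter _ _) continuous_gphi.continuousAt).const_add _
  exact hPhi.const_sub 1

lemma gPhi_zero : gPhi 0 = 1 / 2 := by
  have hsum := intervalIntegral.integral_Iic_add_Ioi (b := 0) integrable_gphi.integrableOn
    integrable_gphi.integrableOn
  have hsymm := integral_comp_neg_Iic 0 gphi
  simp only [gphi_neg, neg_zero] at hsymm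
  rw [integral_gphi, ← hsymm] at hsum
  rw [gPhi]
  linarith

lemma mills_pos (u : ℝ) : 0 < mills u := div_pos (gphi_pos u) (gPhiBar_pos u)

lemma hasDerivAt_mills (u : ℝ) : HasDerivAt mills (mills u ^ 2 - u * mills u) u := by
  refine ((hasDerivAt_gphi u).div (hasDerivAt_gPhiBar u) (gPhiBar_pos u).ne').congr_deriv ?_
  have := (gPhiBar_pos u).ne'
  simp only [mills]
  field_simp
  ring

lemma gphi_sub_mul_gPhiBar_pos (u : ℝ) : 0 < gphi u - u * gPhiBar u := by
  have hint : IntegrableOn (fun s => (s - u) * gphi s) (Ioi u) := by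
    exact (integrable_mul_gphi.sub (integrable_gphi.const_mul u)).integrableOn.congr_fun
      (fun s _ => by simp only [Pi.sub_apply]; ring) measurableSet_Ioi
  have hpos : 0 < ∫ s in Ioi u, (s - u) * gphi s := by
    rw [setIntegral_pos_iff_support_of_nonneg_ae _ hint]
    · have : Function.support (fun s => (s - u) * gphi s) ∩ Ioi u = Ioi u :=
        inter_eq_right.2 fun s hs => (mul_pos (sub_pos.2 hs) (gphi_pos s)).ne'
      rw [this]
      simp
    · filter_upwards [ae_restrict_mem measurableSet_Ioi] with s hs
      exact (mul_pos (sub_pos.2 hs) (gphi_pos s)).le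
  simp only [sub_mul] at hpos
  rwa [integral_sub integrable_mul_gphi.integrableOn (integrable_gphi.const_mul u).integrableOn,
    integral_Ioi_mul_gphi, integral_const_mul, ← gPhiBar_eq_integral_Ioi] at hpos

lemma lt_mills (u : ℝ) : u < mills u := by
  rw [mills, lt_div_iff₀ (gPhiBar_pos u)]
  linarith [gphi_sub_mul_gPhiBar_pos u]

lemma tendsto_gPhiBar_atTop : Tendsto gPhiBar atTop (𝓝 0) := by
  refine squeeze_zero' (.of_forall fun u => (gPhiBar_pos u).le) ?_ tendsto_gphi_atTop
  filter_upwards [eventually_ge_atTop 1] with u hu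
  nlinarith [gphi_sub_mul_gPhiBar_pos u, gPhiBar_pos u]

theorem StrictAnti.lt_of_tendsto {α β : Type*} [TopologicalSpace α] [Preorder α]
    [OrderClosedTopology α] [PartialOrder β] [IsDirectedOrder β] [NoMaxOrder β] {f : β → α}
    {a : α} (hf : StrictAnti f) (ha : Tendsto f atTop (𝓝 a)) (b : β) : a < f b := by
  obtain ⟨c, hc⟩ := exists_gt b
  exact (hf.antitone.le_of_tendsto ha c).trans_lt (hf hc)

-- A convergent of Laplace's continued fraction for the Mills ratio `Φ̄ / φ`.
noncomputable def millsRatioApprox (u : ℝ) : ℝ :=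
  (u ^ 5 + 14 * u ^ 3 + 33 * u) / (u ^ 6 + 15 * u ^ 4 + 45 * u ^ 2 + 15)

lemma hasDerivAt_gPhiBar_sub_gphi_mul_millsRatioApprox (u : ℝ) :
    HasDerivAt (fun v => gPhiBar v - gphi v * millsRatioApprox v)
      (-720 * gphi u / (u ^ 6 + 15 * u ^ 4 + 45 * u ^ 2 + 15) ^ 2) u := by
  have hD : u ^ 6 + 15 * u ^ 4 + 45 * u ^ 2 + 15 ≠ 0 := by positivity
  have hN' : HasDerivAt (fun v => v ^ 5 + 14 * v ^ 3 + 33 * v)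
      (5 * u ^ 4 + 42 * u ^ 2 + 33) u := by
    refine (((hasDerivAt_pow 5 u).add ((hasDerivAt_pow 3 u).const_mul 14)).add
      ((hasDerivAt_id u).const_mul 33)).congr_deriv ?_
    push_cast
    ring
  have hD' : HasDerivAt (fun v => v ^ 6 + 15 * v ^ 4 + 45 * v ^ 2 + 15)
      (6 * u ^ 5 + 60 * u ^ 3 + 90 * u) u := by
    refine ((((hasDerivAt_pow 6 u).add ((hasDerivAt_pow 4 u).const_mul 15)).add
      ((hasDerivAt_pow 2 u).const_mul 45)).add_const 15).congr_deriv ?_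
    push_cast
    ring
  refine ((hasDerivAt_gPhiBar u).sub ((hasDerivAt_gphi u).mul
    (hN'.div hD' hD))).congr_deriv ?_
  simp only [Pi.div_apply]
  field_simp
  ring

lemma tendsto_gphi_mul_millsRatioApprox_atTop :
    Tendsto (fun v => gphi v * millsRatioApprox v) atTop (𝓝 0) := by
  refine squeeze_zero' ?_ ?_ tendsto_gphi_atTop
  · filter_upwards [eventually_ge_atTop 0] with v hv
    exact mul_nonneg (gphi_pos v).le (by unfold millsRatioApprox; positivity)
  · filter_upwards [eventually_ge_atTop 1] with v hv
    refine mul_le_of_le_one_right (gphi_pos v).le ((div_le_one (by positivity)).2 ?_)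
    nlinarith [pow_le_pow_left₀ zero_le_one hv 2, pow_le_pow_left₀ zero_le_one hv 3,
      pow_le_pow_left₀ zero_le_one hv 4, pow_le_pow_left₀ zero_le_one hv 5]

lemma gphi_mul_millsRatioApprox_lt_gPhiBar (u : ℝ) : gphi u * millsRatioApprox u < gPhiBar u := by
  have hanti : StrictAnti fun v => gPhiBar v - gphi v * millsRatioApprox v :=
    strictAnti_of_hasDerivAt_neg hasDerivAt_gPhiBar_sub_gphi_mul_millsRatioApprox fun v =>
      div_neg_of_neg_of_pos (by nlinarith [gphi_pos v]) (by positivity)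
  have hlim : Tendsto (fun v => gPhiBar v - gphi v * millsRatioApprox v) atTop (𝓝 0) := by
    simpa using tendsto_gPhiBar_atTop.sub tendsto_gphi_mul_millsRatioApprox_atTop
  exact sub_pos.1 (hanti.lt_of_tendsto hlim u)

lemma mills_mul_lt (u : ℝ) :
    mills u * (u ^ 5 + 14 * u ^ 3 + 33 * u) < u ^ 6 + 15 * u ^ 4 + 45 * u ^ 2 + 15 := by
  have h := gphi_mul_millsRatioApprox_lt_gPhiBar u
  rw [millsRatioApprox, mul_div_assoc', div_lt_iff₀ (by positivity)] at h
  rw [mills, div_mul_eq_mul_div, div_lt_iff₀ (gPhiBar_pos u)]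
  linarith

def gDerivFactor (u t : ℝ) : ℝ := 6 * t ^ 3 + 6 * u * t ^ 2 + (u ^ 2 - 4) * t - u

lemma gDerivFactor_neg_of_three_le {u t : ℝ} (hu : 3 ≤ u) (ht : 0 < t)
    (htu : t * (u ^ 5 + 14 * u ^ 3 + 33 * u) < u ^ 4 + 12 * u ^ 2 + 15) :
    gDerivFactor u t < 0 := by
  set A := u ^ 4 + 12 * u ^ 2 + 15
  set B := u ^ 5 + 14 * u ^ 3 + 33 * u
  have hB : 0 < B := by positivity
  have hs : 0 < t * B := mul_pos ht hB
  have hmono : 6 * (t * B) ^ 3 + 6 * u * B * (t * B) ^ 2 + (u ^ 2 - 4) * B ^ 2 * (t * B)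
      < 6 * A ^ 3 + 6 * u * B * A ^ 2 + (u ^ 2 - 4) * B ^ 2 * A := by
    have : 0 < u ^ 2 - 4 := by nlinarith
    gcongr
  have hpoly : 6 * A ^ 3 + 6 * u * B * A ^ 2 + (u ^ 2 - 4) * B ^ 2 * A - u * B ^ 3
      = -6 * (u ^ 10 + 21 * u ^ 8 + 58 * u ^ 6 - 966 * u ^ 4 - 4635 * u ^ 2 - 3375) := by
    ring
  have hu2 : 9 ≤ u ^ 2 := by nlinarith
  have hpoly_pos : 0 < u ^ 10 + 21 * u ^ 8 + 58 * u ^ 6 - 966 * u ^ 4 - 4635 * u ^ 2 - 3375 := by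
    nlinarith [pow_le_pow_left₀ (by norm_num) hu2 2, pow_le_pow_left₀ (by norm_num) hu2 3,
      pow_le_pow_left₀ (by norm_num) hu2 4, pow_le_pow_left₀ (by norm_num) hu2 5]
  have hscaled : B ^ 3 * gDerivFactor u t
      = 6 * (t * B) ^ 3 + 6 * u * B * (t * B) ^ 2 + (u ^ 2 - 4) * B ^ 2 * (t * B) - u * B ^ 3 := by
    rw [gDerivFactor]
    ring
  refine neg_of_mul_neg_right ?_ (pow_pos hB 3).le
  linarith

lemma gDerivFactor_mills_sub_neg_of_three_le {u : ℝ} (hu : 3 ≤ u) :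
    gDerivFactor u (mills u - u) < 0 :=
  gDerivFactor_neg_of_three_le hu (sub_pos.2 (lt_mills u)) (by linarith [mills_mul_lt u])

theorem neg_of_eventually_neg_of_deriv_pos_at_zero {f f' : ℝ → ℝ} {a : ℝ}
    (hf : ∀ x, a ≤ x → HasDerivAt f (f' x) x)
    (hzero : ∀ x, a ≤ x → f x = 0 → 0 < f' x)
    (htail : ∀ᶠ x in atTop, f x < 0) {x : ℝ} (hx : a ≤ x) : f x < 0 := by
  by_contra! hfx
  obtain ⟨b, hb⟩ := htail.exists_forall_of_atTop
  set c := max b x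
  have hcont : ContinuousOn f (Icc x c) := fun y hy =>
    (hf y (hx.trans hy.1)).continuousAt.continuousWithinAt
  have hS : IsCompact (Icc x c ∩ f ⁻¹' Ici 0) :=
    isCompact_Icc.of_isClosed_subset (hcont.preimage_isClosed_of_isClosed isClosed_Icc isClosed_Ici)
      inter_subset_left
  obtain ⟨w, ⟨⟨hxw, hwc⟩, hw0⟩, hwmax⟩ :=
    hS.exists_isGreatest ⟨x, ⟨le_rfl, le_max_right b x⟩, hfx⟩
  have hneg : ∀ y, w < y → f y < 0 := by
    intro y hy
    by_contra! hfy
    rcases le_or_gt y c with hyc | hcy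
    · exact (hwmax ⟨⟨hxw.trans hy.le, hyc⟩, hfy⟩).not_gt hy
    · exact (hb y ((le_max_left b x).trans hcy.le)).not_ge hfy
  have hw : f w = 0 := by
    obtain ⟨z, ⟨hwz, hzc⟩, hfz⟩ :=
      intermediate_value_Icc' hwc (hcont.mono (Icc_subset_Icc_left hxw))
        ⟨(hb c (le_max_left b x)).le, hw0⟩
    rwa [le_antisymm (hwmax ⟨⟨hxw.trans hwz, hzc⟩, hfz.ge⟩) hwz] at hfz
  have hslope : f' w ≤ 0 := by
    refine le_of_tendsto (hf w (hx.trans hxw)).tendsto_slope_zero_right ?_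
    filter_upwards [self_mem_nhdsWithin] with t ht
    rw [hw, sub_zero, smul_eq_mul]
    exact mul_nonpos_of_nonneg_of_nonpos (inv_nonneg.2 (le_of_lt ht))
      (hneg _ (lt_add_of_pos_right w ht)).le
  exact (hzero w (hx.trans hxw) hw).not_ge hslope

lemma HasDerivAt.gDerivFactor {t : ℝ → ℝ} {t' u : ℝ} (ht : HasDerivAt t t' u) :
    HasDerivAt (fun v => gDerivFactor v (t v))
      (6 * t u ^ 2 + 2 * u * t u - 1 + (18 * t u ^ 2 + 12 * u * t u + u ^ 2 - 4) * t') u := by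
  have hu : HasDerivAt (fun v : ℝ => v) 1 u := hasDerivAt_id' u
  refine (((((ht.fun_pow 3).const_mul 6).fun_add ((hu.const_mul 6).fun_mul (ht.fun_pow 2))).fun_add
    (((hu.fun_pow 2).sub_const 4).fun_mul ht)).fun_sub hu).congr_deriv ?_
  push_cast
  ring

-- The right-hand side is `(d/du) gDerivFactor u (E u - u)` at `t = E u - u`,
-- since `(E - u)' = t² + ut - 1`.
lemma gDerivFactor_deriv_pos_of_eq_zero {u t : ℝ} (hu : 0 ≤ u) (ht : 0 < t)
    (h : gDerivFactor u t = 0) :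
    0 < 6 * t ^ 2 + 2 * u * t - 1 +
      (18 * t ^ 2 + 12 * u * t + u ^ 2 - 4) * (t ^ 2 + u * t - 1) := by
  have hsplit : 6 * t ^ 2 + 2 * u * t - 1 +
      (18 * t ^ 2 + 12 * u * t + u ^ 2 - 4) * (t ^ 2 + u * t - 1) =
      3 * (1 + 4 * t ^ 2 - 8 * t ^ 4 - t * (6 * t ^ 2 + 1) * u) +
        (u + 7 * t) * gDerivFactor u t := by
    rw [gDerivFactor]
    ring
  rw [hsplit, h, mul_zero, add_zero]
  rw [gDerivFactor] at h
  have ht2 : 3 * t ^ 2 ≤ 2 := by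
    by_contra! h32
    nlinarith [mul_nonneg ht.le (sq_nonneg u), mul_nonneg hu (mul_nonneg ht.le ht.le)]
  have hprod : (1 + 4 * t ^ 2 - 8 * t ^ 4 - t * (6 * t ^ 2 + 1) * u)
      * (4 * t ^ 2 + 28 * t ^ 4 + t * (6 * t ^ 2 + 1) * u)
      = 2 * t ^ 4 * (1 + 4 * t ^ 2 - 4 * t ^ 4) := by
    linear_combination (-(t * (6 * t ^ 2 + 1) ^ 2)) * h
  have hrhs : 0 < 2 * t ^ 4 * (1 + 4 * t ^ 2 - 4 * t ^ 4) :=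
    mul_pos (by positivity) (by nlinarith [sq_nonneg t])
  exact mul_pos three_pos (pos_of_mul_pos_left (hprod ▸ hrhs) (by positivity))

lemma hasDerivAt_mills_sub_self (u : ℝ) :
    HasDerivAt (fun v => mills v - v) ((mills u - u) ^ 2 + u * (mills u - u) - 1) u :=
  ((hasDerivAt_mills u).sub (hasDerivAt_id u)).congr_deriv (by ring)

lemma gDerivFactor_mills_sub_neg {u : ℝ} (hu : 0 ≤ u) : gDerivFactor u (mills u - u) < 0 :=
  neg_of_eventually_neg_of_deriv_pos_at_zero
    (fun v _ => (hasDerivAt_mills_sub_self v).gDerivFactor)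
    (fun v hv h => gDerivFactor_deriv_pos_of_eq_zero hv (sub_pos.2 (lt_mills v)) h)
    ((eventually_ge_atTop 3).mono fun _ => gDerivFactor_mills_sub_neg_of_three_le) hu

lemma hasDerivAt_gfun (u : ℝ) :
    HasDerivAt gfun (2 * mills u ^ 2 * gDerivFactor u (mills u - u)) u := by
  have hm := hasDerivAt_mills u
  have hu : HasDerivAt (fun v : ℝ => v) 1 u := hasDerivAt_id' u
  refine ((hm.fun_pow 2).fun_mul ((((hm.fun_pow 2).const_mul 3).fun_sub
    ((hu.const_mul 4).fun_mul hm)).fun_add (hu.fun_pow 2) |>.sub_const 2)).congr_deriv ?_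
  rw [gDerivFactor]
  push_cast
  ring

lemma gfun_strictAntiOn : StrictAntiOn gfun (Ici 0) := by
  refine strictAntiOn_of_hasDerivWithinAt_neg (convex_Ici 0)
    (fun x _ => (hasDerivAt_gfun x).continuousAt.continuousWithinAt)
    (fun x _ => (hasDerivAt_gfun x).hasDerivWithinAt) fun x hx => ?_
  rw [interior_Ici] at hx
  have := mills_pos x
  exact mul_neg_of_pos_of_neg (by positivity) (gDerivFactor_mills_sub_neg (le_of_lt hx))

lemma mills_zero_sq : mills 0 ^ 2 = 2 / π := by
  rw [mills, gPhiBar, gPhi_zero, gphi, div_pow, div_pow, sq_sqrt (by positivity)]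
  norm_num
  field_simp
  ring

lemma gfun_zero : gfun 0 = 12 / π ^ 2 - 4 / π := by
  rw [gfun, mills_zero_sq]
  field_simp
  ring

theorem stmt_10 :
    StrictAntiOn gfun (Set.Ici (0 : ℝ)) ∧
    (∀ u : ℝ, 0 ≤ u → gfun u ≤ gfun 0) ∧
    gfun 0 = 12 / Real.pi ^ 2 - 4 / Real.pi ∧
    gfun 0 = -(4 * (Real.pi - 3)) / Real.pi ^ 2 := by
  refine ⟨gfun_strictAntiOn, fun u hu => gfun_strictAntiOn.antitoneOn self_mem_Ici hu hu,
    gfun_zero, ?_⟩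
  rw [gfun_zero]
  field_simp
  ring
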